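/- For the 4-dimensional complex Novikov algebra N⁴₀₂ (nonzero products e₁e₁ = e₂, e₂e₁ = e₃, e₁e₃ = e₄, e₃e₁ = -e₄), the second cohomology space H²(N⁴₀₂, ℂ) = Z²/B² is 2-dimensional, spanned by the classes of Δ₁₂ and 2Δ₁₄ - Δ₂₃ - Δ₄₁. -/
import Mathlib


/-- Basis vectors of `Fin 4 → ℂ`. -/
noncomputable def bv (i : Fin 4) : Fin 4 → ℂ := Pi.single i 1

/-- The 4-dimensional Novikov algebra `N⁴₀₂` over ℂ, with nonzero products
`e₁e₁ = e₂`, `e₂e₁ = e₃`, `e₁e₃ = e₄`, `e₃e₁ = -e₄`. -/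
noncomputable def mulN402 (a b : Fin 4 → ℂ) : Fin 4 → ℂ :=
  ![0, a 0 * b 0, a 1 * b 0, a 0 * b 2 - a 2 * b 0]

/-- The bilinear form `Δᵢⱼ` with `Δᵢⱼ(e_l, e_m) = δ_{il} δ_{jm}`. -/
noncomputable def Delta (i j : Fin 4) :
    (Fin 4 → ℂ) →ₗ[ℂ] (Fin 4 → ℂ) →ₗ[ℂ] ℂ :=
  LinearMap.mk₂ ℂ (fun a b => a i * b j)
    (fun a a' b => by simp [add_mul])
    (fun c a b => by simp [smul_eq_mul]; ring)
    (fun a b b' => by simp [mul_add])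
    (fun c a b => by simp [smul_eq_mul]; ring)

/-- `θ` is a 2-cocycle on `N⁴₀₂`. -/
def IsCocycleN402 (θ : (Fin 4 → ℂ) →ₗ[ℂ] (Fin 4 → ℂ) →ₗ[ℂ] ℂ) : Prop :=
  ∀ x y z : Fin 4 → ℂ,
    θ (mulN402 x y) z = θ (mulN402 x z) y ∧
    θ (mulN402 x y) z - θ x (mulN402 y z)
      = θ (mulN402 y x) z - θ y (mulN402 x z)

lemma bilin_expand (θ : (Fin 4 → ℂ) →ₗ[ℂ] (Fin 4 → ℂ) →ₗ[ℂ] ℂ) (x y : Fin 4 → ℂ) :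
    θ x y = ∑ i : Fin 4, ∑ j : Fin 4, x i * y j * θ (bv i) (bv j) := by
  have hx : ∀ v : Fin 4 → ℂ, v = ∑ i : Fin 4, v i • bv i := by
    intro v; funext k
    simp [bv, Pi.single_apply, Finset.sum_apply, Finset.sum_ite_eq]
  conv_lhs => rw [hx x, hx y]
  simp only [map_sum, map_smul, LinearMap.sum_apply, LinearMap.smul_apply, smul_eq_mul]
  rw [Finset.sum_comm]
  refine Finset.sum_congr rfl fun i _ => ?_
  rw [Finset.mul_sum]
  exact Finset.sum_congr rfl fun j _ => by ring

lemma m00 : mulN402 (bv 0) (bv 0) = bv 1 := by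
  funext k; fin_cases k <;> simp [mulN402, bv, Pi.single_apply]
lemma m02 : mulN402 (bv 0) (bv 2) = bv 3 := by
  funext k; fin_cases k <;> simp [mulN402, bv, Pi.single_apply]
lemma m10 : mulN402 (bv 1) (bv 0) = bv 2 := by
  funext k; fin_cases k <;> simp [mulN402, bv, Pi.single_apply]
lemma m20 : mulN402 (bv 2) (bv 0) = -bv 3 := by
  funext k; fin_cases k <;> simp [mulN402, bv, Pi.single_apply]
lemma m01 : mulN402 (bv 0) (bv 1) = 0 := by
  funext k; fin_cases k <;> simp [mulN402, bv, Pi.single_apply]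
lemma m03 : mulN402 (bv 0) (bv 3) = 0 := by
  funext k; fin_cases k <;> simp [mulN402, bv, Pi.single_apply]
lemma m11 : mulN402 (bv 1) (bv 1) = 0 := by
  funext k; fin_cases k <;> simp [mulN402, bv, Pi.single_apply]
lemma m12 : mulN402 (bv 1) (bv 2) = 0 := by
  funext k; fin_cases k <;> simp [mulN402, bv, Pi.single_apply]
lemma m13 : mulN402 (bv 1) (bv 3) = 0 := by
  funext k; fin_cases k <;> simp [mulN402, bv, Pi.single_apply]
lemma m30 : mulN402 (bv 3) (bv 0) = 0 := by
  funext k; fin_cases k <;> simp [mulN402, bv, Pi.single_apply]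
lemma m31 : mulN402 (bv 3) (bv 1) = 0 := by
  funext k; fin_cases k <;> simp [mulN402, bv, Pi.single_apply]
lemma m32 : mulN402 (bv 3) (bv 2) = 0 := by
  funext k; fin_cases k <;> simp [mulN402, bv, Pi.single_apply]

/-- `H²(N⁴₀₂, ℂ)` is 2-dimensional, spanned by the classes of `Δ₁₂` and
`2Δ₁₄ - Δ₂₃ - Δ₄₁`: these two forms are cocycles, every cocycle is a linear
combination of them plus a coboundary `δf(x,y) = f(xy)`, and no nontrivial
linear combination of them is a coboundary. -/
theorem N402_second_cohomology :
    IsCocycleN402 (Delta 0 1) ∧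
    IsCocycleN402 ((2 : ℂ) • Delta 0 3 - Delta 1 2 - Delta 3 0) ∧
    (∀ θ : (Fin 4 → ℂ) →ₗ[ℂ] (Fin 4 → ℂ) →ₗ[ℂ] ℂ, IsCocycleN402 θ →
      ∃ (c₁ c₂ : ℂ) (f : (Fin 4 → ℂ) →ₗ[ℂ] ℂ),
        ∀ x y : Fin 4 → ℂ,
          θ x y = c₁ * Delta 0 1 x y
            + c₂ * ((2 : ℂ) • Delta 0 3 - Delta 1 2 - Delta 3 0) x y
            + f (mulN402 x y)) ∧
    (∀ (c₁ c₂ : ℂ) (f : (Fin 4 → ℂ) →ₗ[ℂ] ℂ),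
      (∀ x y : Fin 4 → ℂ,
        c₁ * Delta 0 1 x y
          + c₂ * ((2 : ℂ) • Delta 0 3 - Delta 1 2 - Delta 3 0) x y
          = f (mulN402 x y)) →
      c₁ = 0 ∧ c₂ = 0) := by
  refine ⟨?_, ?_, ?_, ?_⟩
  · intro x y z
    constructor <;> simp [Delta, mulN402] <;> ring
  · intro x y z
    constructor <;>
      simp [Delta, mulN402, LinearMap.sub_apply, LinearMap.smul_apply, smul_eq_mul] <;> ring
  · intro θ h
    have r11 : θ (bv 1) (bv 1) = 0 := by
      have := (h (bv 0) (bv 0) (bv 1)).1; rw [m00, m01] at this; simpa using this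
    have r13 : θ (bv 1) (bv 3) = 0 := by
      have := (h (bv 0) (bv 0) (bv 3)).1; rw [m00, m03] at this; simpa using this
    have r21 : θ (bv 2) (bv 1) = 0 := by
      have := (h (bv 1) (bv 0) (bv 1)).1; rw [m10, m11] at this; simpa using this
    have r22 : θ (bv 2) (bv 2) = 0 := by
      have := (h (bv 1) (bv 0) (bv 2)).1; rw [m10, m12] at this; simpa using this
    have r23 : θ (bv 2) (bv 3) = 0 := by
      have := (h (bv 1) (bv 0) (bv 3)).1; rw [m10, m13] at this; simpa using this
    have r31 : θ (bv 3) (bv 1) = 0 := by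
      have := (h (bv 3) (bv 0) (bv 0)).2; rw [m30, m00, m03] at this; simpa using this
    have r32 : θ (bv 3) (bv 2) = 0 := by
      have := (h (bv 3) (bv 1) (bv 0)).2; rw [m31, m10, m13, m30] at this; simpa using this
    have r33 : θ (bv 3) (bv 3) = 0 := by
      have := (h (bv 3) (bv 0) (bv 2)).2; rw [m30, m02, m03, m32] at this; simpa using this
    have r20 : θ (bv 2) (bv 0) = -θ (bv 0) (bv 2) := by
      have h' := (h (bv 1) (bv 0) (bv 0)).2; rw [m10, m00, m01] at h'
      simp only [map_zero, LinearMap.zero_apply, zero_sub] at h'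
      linear_combination h' + r11
    have r12 : θ (bv 1) (bv 2) = θ (bv 3) (bv 0) := by
      have := (h (bv 0) (bv 0) (bv 2)).1; rw [m00, m02] at this; exact this
    have r03 : θ (bv 0) (bv 3) = -2 * θ (bv 1) (bv 2) := by
      have h' := (h (bv 2) (bv 0) (bv 0)).2; rw [m20, m00, m02] at h'
      simp only [map_neg, LinearMap.neg_apply, sub_neg_eq_add] at h'
      linear_combination -h' - r21 + 2 * r12
    refine ⟨θ (bv 0) (bv 1), -θ (bv 1) (bv 2),
      θ (bv 0) (bv 0) • LinearMap.proj 1 + θ (bv 1) (bv 0) • LinearMap.proj 2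
        + θ (bv 0) (bv 2) • LinearMap.proj 3, fun x y => ?_⟩
    rw [bilin_expand θ x y]
    simp only [Fin.sum_univ_four, Delta, LinearMap.mk₂_apply, LinearMap.sub_apply,
      LinearMap.smul_apply, LinearMap.add_apply, LinearMap.proj_apply, smul_eq_mul,
      LinearMap.coe_mk, mulN402]
    simp only [Matrix.cons_val_zero, Matrix.cons_val_one, Matrix.head_cons,
      Matrix.cons_val_two, Matrix.cons_val_three, Matrix.tail_cons]
    linear_combination (x 1 * y 1) * r11 + (x 1 * y 3) * r13 + (x 2 * y 1) * r21
      + (x 2 * y 2) * r22 + (x 2 * y 3) * r23 + (x 3 * y 1) * r31 + (x 3 * y 2) * r32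
      + (x 3 * y 3) * r33 + (x 2 * y 0) * r20 + (-(x 3 * y 0)) * r12
      + (x 0 * y 3) * r03
  · intro c₁ c₂ f hf
    constructor
    · have h' := hf (bv 0) (bv 1); rw [m01] at h'
      simpa [Delta, bv, Pi.single_apply] using h'
    · have h' := hf (bv 1) (bv 2); rw [m12] at h'
      simpa [Delta, bv, Pi.single_apply] using h'
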